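/- The friendship graph F_k (k triangles sharing a single common vertex) is 1-local with respect to every colouring. -/

import Mathlib

/-- Number of connected components of the subgraph of `G` induced by `S`. -/
noncomputable def numComponents {V : Type*} (G : SimpleGraph V) (S : Set V) : ℕ :=
  Nat.card (G.induce S).ConnectedComponent

/-- `e` is a marking sequence for the colouring `c`: an enumeration (without
repetition) of exactly the colours occurring. -/
def IsMarkingSeq {V : Type*} (c : V → ℕ) (e : List ℕ) : Prop :=
  e.Nodup ∧ ∀ x, x ∈ e ↔ ∃ v, c v = x

/-- Locality of `G` coloured by `c` w.r.t. the marking sequence `e`: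
the maximal number of connected components over all marking stages. -/
noncomputable def locSeq {V : Type*} (G : SimpleGraph V) (c : V → ℕ) (e : List ℕ) : ℕ :=
  ((List.range e.length).map fun i =>
    numComponents G {v | c v ∈ e.take (i + 1)}).foldr max 0

/-- Locality of `G` w.r.t. the colouring `c`. -/
noncomputable def loc {V : Type*} (G : SimpleGraph V) (c : V → ℕ) : ℕ :=
  sInf {k | ∃ e, IsMarkingSeq c e ∧ locSeq G c e = k}

/-- Number of connected components of `G`. -/
noncomputable def gamma {V : Type*} (G : SimpleGraph V) : ℕ :=
  Nat.card G.ConnectedComponent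

private lemma foldr_max_le {l : List ℕ} {n : ℕ} (h : ∀ x ∈ l, x ≤ n) :
    l.foldr max 0 ≤ n := by
  induction l with
  | nil => exact Nat.zero_le n
  | cons a t ih =>
    simp only [List.foldr_cons]
    exact max_le (h a List.mem_cons_self) (ih fun x hx => h x (List.mem_cons_of_mem a hx))

theorem friendshipGraph_one_local (k : ℕ) (hk : 1 ≤ k)
    (c : Option (Fin k × Fin 2) → ℕ) :
    loc (SimpleGraph.fromRel fun u v : Option (Fin k × Fin 2) =>
      u = none ∨ ∃ i : Fin k, u = some (i, 0) ∧ v = some (i, 1)) c ≤ 1 := by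
  set G := SimpleGraph.fromRel fun u v : Option (Fin k × Fin 2) =>
      u = none ∨ ∃ i : Fin k, u = some (i, 0) ∧ v = some (i, 1) with hG
  -- none is adjacent to everything else
  have hadj : ∀ v : Option (Fin k × Fin 2), v ≠ none → G.Adj none v := by
    intro v hv
    rw [hG, SimpleGraph.fromRel_adj]
    exact ⟨fun h => hv h.symm, Or.inl (Or.inl rfl)⟩
  -- any induced subgraph containing none is connected
  have hconn : ∀ S : Set (Option (Fin k × Fin 2)), none ∈ S → (G.induce S).Connected := by
    intro S hS
    haveI : Nonempty S := ⟨⟨none, hS⟩⟩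
    refine ⟨fun u v => ?_⟩
    have key : ∀ w : S, (G.induce S).Reachable ⟨none, hS⟩ w := by
      intro w
      by_cases hw : (w : Option (Fin k × Fin 2)) = none
      · have : w = ⟨none, hS⟩ := Subtype.ext hw
        rw [this]
      · exact SimpleGraph.Adj.reachable (by exact hadj w hw)
    exact (key u).symm.trans (key v)
  -- the marking sequence
  classical
  set s : Finset ℕ := Finset.image c Finset.univ with hs
  set e : List ℕ := c none :: (s.erase (c none)).toList with he
  have hcs : c none ∈ s := Finset.mem_image.mpr ⟨none, Finset.mem_univ _, rfl⟩
  have hmark : IsMarkingSeq c e := by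
    constructor
    · rw [he, List.nodup_cons]
      refine ⟨fun h => ?_, Finset.nodup_toList _⟩
      exact (Finset.mem_erase.mp (Finset.mem_toList.mp h)).1 rfl
    · intro x
      rw [he]
      constructor
      · intro hx
        rcases List.mem_cons.mp hx with h | h
        · exact ⟨none, h.symm⟩
        · obtain ⟨v, _, hv⟩ := Finset.mem_image.mp (Finset.mem_erase.mp
            (Finset.mem_toList.mp h)).2
          exact ⟨v, hv⟩
      · rintro ⟨v, rfl⟩
        by_cases hx : c v = c none
        · exact List.mem_cons.mpr (Or.inl hx)
        · exact List.mem_cons.mpr (Or.inr (Finset.mem_toList.mpr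
            (Finset.mem_erase.mpr ⟨hx, Finset.mem_image.mpr ⟨v, Finset.mem_univ _, rfl⟩⟩)))
  -- each stage has one component
  have hstage : ∀ i ∈ List.range e.length,
      numComponents G {v | c v ∈ e.take (i + 1)} ≤ 1 := by
    intro i _
    have hnone : (none : Option (Fin k × Fin 2)) ∈ {v | c v ∈ e.take (i + 1)} := by
      show c none ∈ e.take (i + 1)
      rw [he, List.take_succ_cons]
      exact List.mem_cons_self
    have hc := hconn _ hnone
    have h1 : Nat.card (G.induce {v | c v ∈ e.take (i + 1)}).ConnectedComponent = 1 := by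
      rw [Nat.card_eq_one_iff_unique]
      refine ⟨⟨fun a b => ?_⟩, ⟨SimpleGraph.connectedComponentMk _ ⟨none, hnone⟩⟩⟩
      refine SimpleGraph.ConnectedComponent.ind₂ (fun u v => ?_) a b
      exact SimpleGraph.ConnectedComponent.sound (hc.preconnected u v)
    rw [numComponents, h1]
  -- locSeq bound
  have hloc : locSeq G c e ≤ 1 := by
    rw [locSeq]
    apply foldr_max_le
    intro x hx
    obtain ⟨i, hi, rfl⟩ := List.mem_map.mp hx
    exact hstage i hi
  calc loc G c ≤ locSeq G c e := Nat.sInf_le ⟨e, hmark, rfl⟩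
    _ ≤ 1 := hloc
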